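/- Under the assumptions κ ≥ K > 0 and sup_x 𝒟_x ≤ Λ (Λ ≥ 1), for every probability density ρ with respect to the Perron measure 𝔪 one has W(𝔪, ρ𝔪)² ≤ (Λ²/(2K²)) ℐ(ρ)(1 − ℐ(ρ)/8) ≤ (Λ²/(2K²)) ℐ(ρ), where ℐ(ρ) = 2 Σ_{x,y} (√ρ(y) − √ρ(x))² 𝔪_{xy} is the Fisher information. -/

import Mathlib

/-!
By Kantorovich duality (obtained from Hahn–Banach separation of the compact set of marginals and
costs of probability measures on `V × V`) it suffices to bound `∑ f (ρ - 1) 𝔪` for 1-Lipschitz `f`.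
Split `f = Q f + ℒ f / 2` with the lazy walk `Q = I - ℒ / 2`. The curvature bound, applied to
`max f (f x + d(x, y) - d(·, y))`, a 1-Lipschitz function of maximal slope on `(x, y)`, shows that
`Q` turns 1-Lipschitz functions into `(1 - K / 2)`-Lipschitz ones, while the discrete Green formula
bounds `∑ ℒ f (ρ - 1) 𝔪` by `(Λ / 2) ∑ |ρ(y) - ρ(x)| 𝔪_{xy}`. Hence the supremum `S` of the dual
functional satisfies `S ≤ (1 - K / 2) S + (Λ / 4) ∑ |ρ(y) - ρ(x)| 𝔪_{xy}`, which gives Lemma 5.1.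
Cauchy–Schwarz with `|ρ(y) - ρ(x)| = |√ρ(y) - √ρ(x)| (√ρ(y) + √ρ(x))` and
`∑ (√ρ(y) + √ρ(x))² 𝔪_{xy} ≤ 4 - ℐ(ρ) / 2` finishes the proof.
-/

open Finset

namespace Chung

variable {V : Type*}

/-- There is a directed path of length `n` from `x` to `y` (edges are pairs of
positive weight). -/
def PathLen (μ : V → V → ℝ) (n : ℕ) (x y : V) : Prop :=
  ∃ p : ℕ → V, p 0 = x ∧ p n = y ∧ ∀ i < n, 0 < μ (p i) (p (i + 1))

/-- The (non-symmetric) graph distance: the minimal length of a directed path. -/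
noncomputable def gdist (μ : V → V → ℝ) (x y : V) : ℝ :=
  (sInf {n : ℕ | PathLen μ n x y} : ℕ)

/-- `(V,μ)` is a simple, strongly connected weighted directed graph. -/
def IsGraph (μ : V → V → ℝ) : Prop :=
  (∀ x y, 0 ≤ μ x y) ∧ (∀ x, μ x x = 0) ∧ (∀ x y, ∃ n, PathLen μ n x y)

variable [Fintype V]

/-- The transition probability kernel `P(x,y) = μ_{xy}/μ(x)`. -/
noncomputable def ker (μ : V → V → ℝ) (x y : V) : ℝ := μ x y / ∑ z, μ x z

/-- `m` is the Perron (stationary probability) measure of the kernel `P`. -/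
def IsPerron (μ : V → V → ℝ) (m : V → ℝ) : Prop :=
  (∀ x, 0 < m x) ∧ (∑ x, m x = 1) ∧ ∀ y, m y = ∑ x, m x * ker μ x y

/-- The mean transition probability kernel `𝒫 = (P + ←P)/2`,
where `←P(x,y) = m(y)P(y,x)/m(x)`. -/
noncomputable def meanKer (μ : V → V → ℝ) (m : V → ℝ) (x y : V) : ℝ :=
  (ker μ x y + m y * ker μ y x / m x) / 2

variable [DecidableEq V]

/-- The Chung Laplacian `ℒ = I − 𝒫` as a matrix. -/
noncomputable def lapMat (μ : V → V → ℝ) (m : V → ℝ) : Matrix V V ℝ :=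
  1 - Matrix.of (meanKer μ m)

/-- The Chung Laplacian applied to a function. -/
noncomputable def lap (μ : V → V → ℝ) (m : V → ℝ) (f : V → ℝ) : V → ℝ :=
  (lapMat μ m).mulVec f

/-- The heat semigroup `P_t = e^{−tℒ}` as a matrix. -/
noncomputable def heatMat (μ : V → V → ℝ) (m : V → ℝ) (t : ℝ) : Matrix V V ℝ :=
  NormedSpace.exp ((-t) • lapMat μ m)

/-- `P_t f`. -/
noncomputable def heatSG (μ : V → V → ℝ) (m : V → ℝ) (t : ℝ) (f : V → ℝ) : V → ℝ :=
  (heatMat μ m t).mulVec f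

/-- The heat kernel measure `p_x^t(y) = m(y)·(P_t δ_x)(y)/m(x)`. -/
noncomputable def heatKer (μ : V → V → ℝ) (m : V → ℝ) (t : ℝ) (x y : V) : ℝ :=
  m y * heatSG μ m t (fun z => if z = x then 1 else 0) y / m x

/-- `π` is a coupling of the probability measures `ν₀` and `ν₁`. -/
def IsCoupling (π : V → V → ℝ) (ν₀ ν₁ : V → ℝ) : Prop :=
  (∀ x y, 0 ≤ π x y) ∧ (∀ x, ∑ y, π x y = ν₀ x) ∧ (∀ y, ∑ x, π x y = ν₁ y)

/-- Wasserstein distance for the (possibly non-symmetric) cost `d`. -/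
noncomputable def wass (d : V → V → ℝ) (ν₀ ν₁ : V → ℝ) : ℝ :=
  sInf {r : ℝ | ∃ π : V → V → ℝ, IsCoupling π ν₀ ν₁ ∧ r = ∑ x, ∑ y, d x y * π x y}

/-- Lipschitz constant with respect to the (non-symmetric) distance `d`. -/
noncomputable def lipConst (d : V → V → ℝ) (f : V → ℝ) : ℝ :=
  sSup {r : ℝ | ∃ x y, x ≠ y ∧ r = (f y - f x) / d x y}

/-- The Lin–Lu–Yau type Ricci curvature of the directed graph, via the limit-free
formula `κ(x,y) = inf {∇_{xy} ℒf : f 1-Lipschitz, ∇_{xy} f = 1}`. -/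
noncomputable def ricci (μ : V → V → ℝ) (m : V → ℝ) (x y : V) : ℝ :=
  sInf {r : ℝ | ∃ f : V → ℝ, (∀ a b, f b - f a ≤ gdist μ a b) ∧
    (f y - f x) / gdist μ x y = 1 ∧
    r = (lap μ m f y - lap μ m f x) / gdist μ x y}

section Lipschitz

variable {V : Type*} {d : V → V → ℝ}

theorem lipschitz_cTransform [Fintype V] [Nonempty V] (hdtri : ∀ x y z, d x z ≤ d x y + d y z)
    (φ : V → ℝ) :
    ∀ a b, univ.inf' univ_nonempty (fun x => d x b - φ x)
      - univ.inf' univ_nonempty (fun x => d x a - φ x) ≤ d a b := by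
  intro a b
  obtain ⟨x, -, hx⟩ := exists_mem_eq_inf' univ_nonempty (fun x => d x a - φ x)
  have := inf'_le (fun x => d x b - φ x) (mem_univ x)
  linarith [hdtri x a b]

theorem exists_lipschitz_ge_attaining (hd0 : ∀ x, d x x = 0)
    (hdtri : ∀ x y z, d x z ≤ d x y + d y z) {f : V → ℝ} (hf : ∀ a b, f b - f a ≤ d a b)
    (x y : V) :
    ∃ g : V → ℝ, (∀ a b, g b - g a ≤ d a b) ∧ g x = f x ∧ g y = f x + d x y ∧
      ∀ z, f z ≤ g z ∧ g z ≤ f z + (d x y - (f y - f x)) := by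
  refine ⟨fun z => max (f z) (f x + d x y - d z y), fun a b => ?_, by simp, ?_,
    fun z => ⟨le_max_left _ _, max_le (by linarith [hf x y]) (by linarith [hf z y])⟩⟩
  · rw [sub_le_iff_le_add]
    refine max_le ?_ ?_
    · linarith [hf a b, le_max_left (f a) (f x + d x y - d a y)]
    · linarith [hdtri a b y, le_max_right (f a) (f x + d x y - d a y)]
  · simp only [hd0, sub_zero]
    exact max_eq_right (by linarith [hf x y])

theorem sum_mul_le_mul_of_lipschitz [Fintype V] {ν : V → ℝ} (hν : ∑ z, ν z = 0) {B : ℝ}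
    (hB : ∀ f : V → ℝ, (∀ a b, f b - f a ≤ d a b) → ∑ z, f z * ν z ≤ B) {L : ℝ} (hL : 0 ≤ L)
    {g : V → ℝ} (hg : ∀ a b, g b - g a ≤ L * d a b) : ∑ z, g z * ν z ≤ L * B := by
  rcases hL.eq_or_lt with rfl | hL
  · rcases isEmpty_or_nonempty V with hV | ⟨⟨z₀⟩⟩
    · simp
    have hconst : ∀ z, g z = g z₀ := fun z =>
      le_antisymm (by linarith [hg z₀ z]) (by linarith [hg z z₀])
    simp [hconst, ← mul_sum, hν]
  · have := hB (fun z => g z / L) fun a b => by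
      rw [← sub_div, div_le_iff₀' hL]
      exact hg a b
    calc ∑ z, g z * ν z = L * ∑ z, g z / L * ν z := by
          rw [mul_sum]
          exact sum_congr rfl fun z _ => by field_simp
      _ ≤ L * B := mul_le_mul_of_nonneg_left this hL.le

end Lipschitz

section Coupling

variable {V : Type*} [Fintype V]

theorem isCoupling_prod {p q : V → ℝ} (hp : ∀ x, 0 ≤ p x) (hq : ∀ y, 0 ≤ q y)
    (hps : ∑ x, p x = 1) (hqs : ∑ y, q y = 1) :
    IsCoupling (fun x y => p x * q y) p q :=
  ⟨fun x y => mul_nonneg (hp x) (hq y), fun x => by rw [← mul_sum, hqs, mul_one],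
    fun y => by rw [← sum_mul, hps, one_mul]⟩

theorem wass_le_cost {d : V → V → ℝ} (hd : ∀ x y, 0 ≤ d x y) {p q : V → ℝ} {π : V → V → ℝ}
    (hπ : IsCoupling π p q) : wass d p q ≤ ∑ x, ∑ y, d x y * π x y := by
  refine csInf_le ⟨0, ?_⟩ ⟨π, hπ, rfl⟩
  rintro _ ⟨π', hπ', rfl⟩
  exact sum_nonneg fun x _ => sum_nonneg fun y _ => mul_nonneg (hd x y) (hπ'.1 x y)

theorem wass_nonneg {d : V → V → ℝ} (hd : ∀ x y, 0 ≤ d x y) {p q : V → ℝ} {π : V → V → ℝ}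
    (hπ : IsCoupling π p q) : 0 ≤ wass d p q := by
  refine le_csInf ⟨_, π, hπ, rfl⟩ ?_
  rintro _ ⟨π', hπ', rfl⟩
  exact sum_nonneg fun x _ => sum_nonneg fun y _ => mul_nonneg (hd x y) (hπ'.1 x y)

theorem sum_mul_sub_le_cost {d : V → V → ℝ} {p q f : V → ℝ} {π : V → V → ℝ}
    (hπ : IsCoupling π p q) (hf : ∀ a b, f b - f a ≤ d a b) :
    ∑ z, f z * (q z - p z) ≤ ∑ x, ∑ y, d x y * π x y := by
  have hsplit : ∑ z, f z * (q z - p z) = ∑ x, ∑ y, (f y - f x) * π x y := by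
    simp only [sub_mul, sum_sub_distrib, mul_sub, ← hπ.2.1, ← hπ.2.2, mul_sum]
    rw [sum_comm (f := fun y x => f y * π x y)]
  rw [hsplit]
  exact sum_le_sum fun x _ => sum_le_sum fun y _ =>
    mul_le_mul_of_nonneg_right (hf x y) (hπ.1 x y)

variable (d : V → V → ℝ)

def marginalsCost : (V × V → ℝ) →ₗ[ℝ] (V → ℝ) × (V → ℝ) × ℝ where
  toFun s := (fun x => ∑ y, s (x, y), fun y => ∑ x, s (x, y), ∑ x, ∑ y, d x y * s (x, y))
  map_add' s t := by ext <;> simp [sum_add_distrib, mul_add]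
  map_smul' c s := by ext <;> simp [mul_sum, mul_left_comm]

theorem marginalsCost_single [DecidableEq V] (x y : V) :
    marginalsCost d (Pi.single (x, y) 1) = (Pi.single x 1, Pi.single y 1, d x y) := by
  ext z <;> simp [marginalsCost, Pi.single_apply, Prod.ext_iff, ite_and]

theorem apply_prod_eq_sum [DecidableEq V] (ℓ : (V → ℝ) × (V → ℝ) × ℝ →L[ℝ] ℝ) (a b : V → ℝ)
    (t : ℝ) :
    ℓ (a, b, t) = ∑ x, a x * ℓ (Pi.single x 1, 0, 0) + ∑ y, b y * ℓ (0, Pi.single y 1, 0)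
      + t * ℓ (0, 0, 1) := by
  have : ((a, b, t) : (V → ℝ) × (V → ℝ) × ℝ) = ∑ x, a x • ((Pi.single x 1 : V → ℝ), 0, 0)
      + ∑ y, b y • (0, (Pi.single y 1 : V → ℝ), 0) + t • (0, 0, 1) := by
    ext z <;> simp [Prod.fst_sum, Prod.snd_sum, Pi.single_apply]
  rw [this, map_add, map_add, map_sum, map_sum, map_smul]
  simp only [map_smul, smul_eq_mul]

theorem exists_separating_potentials [DecidableEq V] {p q : V → ℝ} {C : ℝ}
    (h : ∀ π, IsCoupling π p q → C < ∑ x, ∑ y, d x y * π x y) :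
    ∃ (F G : V → ℝ) (lam u : ℝ), lam ≤ 0 ∧ (∀ x y, F x + G y + lam * d x y < u) ∧
      u < ∑ x, p x * F x + ∑ y, q y * G y + lam * C := by
  have hdisj : Disjoint (marginalsCost d '' stdSimplex ℝ (V × V))
      (({p} : Set (V → ℝ)) ×ˢ ({q} : Set (V → ℝ)) ×ˢ Set.Iic C) := by
    refine Set.disjoint_left.2 ?_
    rintro _ ⟨s, hs, rfl⟩ ⟨hrow, hcol, hcost⟩
    have hπ : IsCoupling (fun x y => s (x, y)) p q :=
      ⟨fun x y => hs.1 _, fun x => congrFun (Set.mem_singleton_iff.1 hrow) x,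
        fun y => congrFun (Set.mem_singleton_iff.1 hcol) y⟩
    exact (h _ hπ).not_ge hcost
  obtain ⟨ℓ, u, v, hK, huv, hT⟩ := geometric_hahn_banach_compact_closed
    ((convex_stdSimplex ℝ _).linear_image _)
    ((isCompact_stdSimplex ℝ _).image (LinearMap.continuous_of_finiteDimensional _))
    ((convex_singleton p).prod ((convex_singleton q).prod (convex_Iic C)))
    (isClosed_singleton.prod (isClosed_singleton.prod isClosed_Iic)) hdisj
  set F : V → ℝ := fun x => ℓ (Pi.single x 1, 0, 0)
  set G : V → ℝ := fun y => ℓ (0, Pi.single y 1, 0)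
  set lam := ℓ (0, 0, 1)
  set A := ∑ x, p x * F x + ∑ y, q y * G y
  have hℓ := apply_prod_eq_sum ℓ
  have hA : ∀ t ≤ C, v < A + t * lam := fun t ht => by
    have := hT (p, q, t) ⟨rfl, rfl, ht⟩
    rwa [hℓ] at this
  have hlam : lam ≤ 0 := by
    by_contra! hlam
    have := hA ((v - A) / lam) ((div_le_iff₀ hlam).2 (by linarith [hA C le_rfl]))
    rw [div_mul_cancel₀ _ hlam.ne'] at this
    linarith
  refine ⟨F, G, lam, u, hlam, fun x y => ?_, by linarith [hA C le_rfl]⟩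
  have := hK _ ⟨Pi.single (x, y) 1, single_mem_stdSimplex ℝ _, rfl⟩
  rw [marginalsCost_single, hℓ] at this
  simpa [Pi.single_apply, mul_comm] using this

theorem exists_coupling_cost_le (hd0 : ∀ x, d x x = 0) (hdtri : ∀ x y z, d x z ≤ d x y + d y z)
    {p q : V → ℝ} (hp : ∀ x, 0 ≤ p x) (hq : ∀ y, 0 ≤ q y) (hps : ∑ x, p x = 1)
    (hqs : ∑ y, q y = 1) {C : ℝ}
    (hC : ∀ f : V → ℝ, (∀ a b, f b - f a ≤ d a b) → ∑ z, f z * (q z - p z) ≤ C) :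
    ∃ π, IsCoupling π p q ∧ ∑ x, ∑ y, d x y * π x y ≤ C := by
  classical
  by_contra! h
  obtain ⟨F, G, lam, u, hlam, hFG, hu⟩ := exists_separating_potentials d h
  have : Nonempty V := univ_nonempty_iff.1 (nonempty_of_sum_ne_zero (hps ▸ one_ne_zero))
  rcases hlam.eq_or_lt with rfl | hlam
  · have hmean {w φ : V → ℝ} (hw : ∀ x, 0 ≤ w x) (hws : ∑ x, w x = 1) {c : ℝ}
        (hc : ∀ x, φ x ≤ c) : ∑ x, w x * φ x ≤ c :=
      (sum_le_sum fun x _ => mul_le_mul_of_nonneg_left (hc x) (hw x)).trans_eq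
        (by rw [← sum_mul, hws, one_mul])
    obtain ⟨x₀, -, hx₀⟩ := exists_max_image univ F univ_nonempty
    obtain ⟨y₀, -, hy₀⟩ := exists_max_image univ G univ_nonempty
    linarith [hFG x₀ y₀, hmean hp hps fun x => hx₀ x (mem_univ x),
      hmean hq hqs fun y => hy₀ y (mem_univ y)]
  -- the `c`-transform of the potential `F / (-lam)` is a 1-Lipschitz test function
  set f := fun b => univ.inf' univ_nonempty (fun x => d x b - F x / -lam)
  have hneg : 0 < -lam := neg_pos.2 hlam
  have hlow : ∀ y, G y - u ≤ -lam * f y := fun y => by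
    rw [← div_le_iff₀' hneg]
    refine le_inf' _ _ fun x _ => ?_
    rw [div_le_iff₀ hneg, sub_mul, div_mul_cancel₀ _ hneg.ne']
    linarith [hFG x y]
  have hup : ∀ x, F x ≤ lam * f x := fun x => by
    have hfx : f x ≤ d x x - F x / -lam := inf'_le _ (mem_univ x)
    have := mul_le_mul_of_nonneg_left hfx hneg.le
    rw [hd0, mul_sub, mul_div_cancel₀ _ hneg.ne'] at this
    linarith
  have hterm : ∀ z, q z * (G z - u) + p z * F z ≤ -lam * (f z * (q z - p z)) := fun z => by
    have h1 := mul_le_mul_of_nonneg_left (hlow z) (hq z)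
    have h2 := mul_le_mul_of_nonneg_left (hup z) (hp z)
    linarith
  have hsum := sum_le_sum fun z (_ : z ∈ univ) => hterm z
  rw [← mul_sum, sum_add_distrib] at hsum
  have hCf := mul_le_mul_of_nonneg_left (hC f (lipschitz_cTransform hdtri _)) hneg.le
  simp only [mul_sub, sum_sub_distrib, ← sum_mul, hqs, one_mul] at hsum hCf
  linarith

end Coupling

section GraphDistance

variable {V : Type*} {μ : V → V → ℝ}

theorem PathLen.append {n k : ℕ} {x y z : V} (h₁ : PathLen μ n x y) (h₂ : PathLen μ k y z) :
    PathLen μ (n + k) x z := by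
  obtain ⟨p, hp0, hpn, hp⟩ := h₁
  obtain ⟨q, hq0, hqk, hq⟩ := h₂
  refine ⟨fun i => if i ≤ n then p i else q (i - n), by simpa using hp0, ?_, fun i hi => ?_⟩
  · rcases Nat.eq_zero_or_pos k with rfl | hk
    · simp [hpn, ← hq0, hqk]
    · simpa [show ¬n + k ≤ n by omega] using hqk
  · rcases lt_trichotomy i n with h | rfl | h
    · simpa [h.le, show i + 1 ≤ n from h] using hp i h
    · simpa [hpn, ← hq0] using hq 0 (by omega)
    · simpa [show ¬i ≤ n by omega, show ¬i + 1 ≤ n by omega, show i + 1 - n = i - n + 1 by omega]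
        using hq (i - n) (by omega)

theorem gdist_nonneg (x y : V) : 0 ≤ gdist μ x y := Nat.cast_nonneg _

theorem gdist_self (x : V) : gdist μ x x = 0 := by
  have : 0 ∈ {n | PathLen μ n x x} := ⟨fun _ => x, rfl, rfl, fun i hi => absurd hi i.not_lt_zero⟩
  simp [gdist, Nat.sInf_eq_zero.2 (Or.inl this)]

theorem gdist_triangle (hconn : ∀ x y : V, ∃ n, PathLen μ n x y) (x y z : V) :
    gdist μ x z ≤ gdist μ x y + gdist μ y z := by
  have hxy : PathLen μ (sInf {n | PathLen μ n x y}) x y := Nat.sInf_mem (hconn x y)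
  have hyz : PathLen μ (sInf {n | PathLen μ n y z}) y z := Nat.sInf_mem (hconn y z)
  have := Nat.sInf_le (show _ ∈ {n | PathLen μ n x z} from hxy.append hyz)
  unfold gdist
  exact_mod_cast this

theorem one_le_gdist (hconn : ∀ x y : V, ∃ n, PathLen μ n x y) {x y : V} (hxy : x ≠ y) :
    1 ≤ gdist μ x y := by
  have hmem := Nat.sInf_mem (hconn x y)
  have : sInf {n : ℕ | PathLen μ n x y} ≠ 0 := fun h => by
    obtain ⟨p, hp0, hpn, -⟩ := h ▸ hmem
    exact hxy (hp0.symm.trans hpn)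
  unfold gdist
  exact_mod_cast Nat.one_le_iff_ne_zero.2 this

theorem exists_pos_of_isGraph [Nontrivial V] (hG : IsGraph μ) (x : V) : ∃ y, 0 < μ x y := by
  obtain ⟨y, hy⟩ := exists_ne x
  obtain ⟨n, p, hp0, hpn, hp⟩ := hG.2.2 x y
  have hn : n ≠ 0 := by rintro rfl; exact hy (hpn.symm.trans hp0)
  exact ⟨p 1, hp0 ▸ hp 0 (Nat.pos_of_ne_zero hn)⟩

end GraphDistance

section MarkovKernel

variable {V : Type*} [Fintype V] {μ : V → V → ℝ} {m : V → ℝ} {Λ : ℝ}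

theorem ker_nonneg (hneg : ∀ x y, 0 ≤ μ x y) (x y : V) : 0 ≤ ker μ x y :=
  div_nonneg (hneg x y) (sum_nonneg fun z _ => hneg x z)

theorem sum_ker_le_one (x : V) : ∑ y, ker μ x y ≤ 1 := by
  simp only [ker, ← sum_div]
  exact div_self_le_one _

theorem sum_ker_eq_one [Nontrivial V] (hG : IsGraph μ) (x : V) : ∑ y, ker μ x y = 1 := by
  obtain ⟨y, hy⟩ := exists_pos_of_isGraph hG x
  simp only [ker, ← sum_div]
  exact div_self (hy.trans_le (single_le_sum (fun z _ => hG.1 x z) (mem_univ y))).ne'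

theorem sum_meanKer (hP : IsPerron μ m) (x : V) :
    ∑ y, meanKer μ m x y = (∑ y, ker μ x y + 1) / 2 := by
  simp only [meanKer, ← sum_div, sum_add_distrib]
  rw [← hP.2.2 x, div_self (hP.1 x).ne']

theorem sum_meanKer_eq_one [Nontrivial V] (hG : IsGraph μ) (hP : IsPerron μ m) (x : V) :
    ∑ y, meanKer μ m x y = 1 := by
  rw [sum_meanKer hP, sum_ker_eq_one hG]
  norm_num

theorem meanKer_nonneg (hG : IsGraph μ) (hP : IsPerron μ m) (x y : V) : 0 ≤ meanKer μ m x y := by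
  have := ker_nonneg hG.1 x y
  have := ker_nonneg hG.1 y x
  have := hP.1 x
  have := hP.1 y
  unfold meanKer
  positivity

theorem mul_meanKer_comm (hP : IsPerron μ m) (x y : V) :
    m x * meanKer μ m x y = m y * meanKer μ m y x := by
  have := (hP.1 x).ne'
  have := (hP.1 y).ne'
  unfold meanKer
  field_simp
  ring

theorem sum_sum_mul_meanKer_le (hP : IsPerron μ m) {ρ : V → ℝ}
    (hρ : ∀ x, 0 ≤ ρ x) (hρm : ∑ x, ρ x * m x = 1) :
    ∑ x, ∑ y, ρ x * (m x * meanKer μ m x y) ≤ 1 := by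
  simp only [← mul_assoc, ← mul_sum]
  refine (sum_le_sum fun x _ => ?_).trans hρm.le
  have : ∑ y, meanKer μ m x y ≤ 1 := by linarith [sum_meanKer hP x, sum_ker_le_one (μ := μ) x]
  exact mul_le_of_le_one_right (mul_nonneg (hρ x) (hP.1 x).le) this

theorem edge_of_meanKer_pos (hneg : ∀ x y, 0 ≤ μ x y) {x y : V} (h : 0 < meanKer μ m x y) :
    0 < μ x y ∨ 0 < μ y x := by
  by_contra! h'
  have h₁ : μ x y = 0 := le_antisymm h'.1 (hneg x y)
  have h₂ : μ y x = 0 := le_antisymm h'.2 (hneg y x)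
  simp [meanKer, ker, h₁, h₂] at h

theorem meanKer_mul_abs_sub_le (hG : IsGraph μ) (hP : IsPerron μ m)
    (hD : ∀ x y : V, (0 < μ x y ∨ 0 < μ y x) → max (gdist μ x y) (gdist μ y x) ≤ Λ)
    {f : V → ℝ} (hf : ∀ a b, f b - f a ≤ gdist μ a b) (z w : V) :
    meanKer μ m z w * |f z - f w| ≤ meanKer μ m z w * Λ := by
  rcases (meanKer_nonneg hG hP z w).eq_or_lt with h | h
  · simp [← h]
  obtain ⟨hzw, hwz⟩ := max_le_iff.1 (hD z w (edge_of_meanKer_pos hG.1 h))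
  exact mul_le_mul_of_nonneg_left
    (abs_sub_le_iff.2 ⟨(hf w z).trans hwz, (hf z w).trans hzw⟩) h.le

end MarkovKernel

section Laplacian

variable {V : Type*} [Fintype V] [DecidableEq V] {μ : V → V → ℝ} {m : V → ℝ} {K Λ : ℝ}

theorem lap_apply (f : V → ℝ) (z : V) : lap μ m f z = f z - ∑ w, meanKer μ m z w * f w := by
  simp only [lap, lapMat, Matrix.sub_mulVec, Matrix.one_mulVec, Pi.sub_apply]
  rfl

theorem lap_eq_sum [Nontrivial V] (hG : IsGraph μ) (hP : IsPerron μ m) (f : V → ℝ) (z : V) :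
    lap μ m f z = ∑ w, meanKer μ m z w * (f z - f w) := by
  simp only [lap_apply, mul_sub, sum_sub_distrib, ← sum_mul, sum_meanKer_eq_one hG hP, one_mul]

theorem abs_lap_le [Nontrivial V] (hG : IsGraph μ) (hP : IsPerron μ m)
    (hD : ∀ x y : V, (0 < μ x y ∨ 0 < μ y x) → max (gdist μ x y) (gdist μ y x) ≤ Λ)
    {f : V → ℝ} (hf : ∀ a b, f b - f a ≤ gdist μ a b) (z : V) : |lap μ m f z| ≤ Λ := by
  rw [lap_eq_sum hG hP]
  calc |∑ w, meanKer μ m z w * (f z - f w)|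
      ≤ ∑ w, meanKer μ m z w * |f z - f w| := by
        refine (abs_sum_le_sum_abs _ _).trans_eq (sum_congr rfl fun w _ => ?_)
        rw [abs_mul, abs_of_nonneg (meanKer_nonneg hG hP z w)]
    _ ≤ ∑ w, meanKer μ m z w * Λ := sum_le_sum fun w _ => meanKer_mul_abs_sub_le hG hP hD hf z w
    _ = Λ := by rw [← sum_mul, sum_meanKer_eq_one hG hP, one_mul]

theorem mul_gdist_le_lap_sub [Nontrivial V] (hG : IsGraph μ) (hP : IsPerron μ m)
    (hcurv : ∀ x y : V, x ≠ y → K ≤ ricci μ m x y)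
    (hD : ∀ x y : V, (0 < μ x y ∨ 0 < μ y x) → max (gdist μ x y) (gdist μ y x) ≤ Λ)
    {x y : V} (hxy : x ≠ y) {g : V → ℝ} (hg : ∀ a b, g b - g a ≤ gdist μ a b)
    (hgrad : g y - g x = gdist μ x y) :
    K * gdist μ x y ≤ lap μ m g y - lap μ m g x := by
  have hd : 0 < gdist μ x y := one_pos.trans_le (one_le_gdist hG.2.2 hxy)
  have := (hcurv x y hxy).trans <| csInf_le ⟨-(2 * Λ) / gdist μ x y, by
      rintro _ ⟨f, hf, -, rfl⟩
      have := abs_le.1 (abs_lap_le hG hP hD hf y)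
      have := abs_le.1 (abs_lap_le hG hP hD hf x)
      exact div_le_div_of_nonneg_right (by linarith) hd.le⟩
    ⟨g, hg, by rw [hgrad, div_self hd.ne'], rfl⟩
  rwa [le_div_iff₀ hd] at this

theorem sum_lap_mul_eq [Nontrivial V] (hG : IsGraph μ) (hP : IsPerron μ m) (f h : V → ℝ) :
    ∑ z, lap μ m f z * (h z * m z)
      = (∑ x, ∑ y, m x * meanKer μ m x y * ((f x - f y) * (h x - h y))) / 2 := by
  have h₁ : ∑ z, lap μ m f z * (h z * m z)
      = ∑ x, ∑ y, m x * meanKer μ m x y * ((f x - f y) * h x) := by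
    simp only [lap_eq_sum hG hP, sum_mul]
    exact sum_congr rfl fun x _ => sum_congr rfl fun y _ => by ring
  have h₂ : ∑ x, ∑ y, m x * meanKer μ m x y * ((f x - f y) * h x)
      = ∑ x, ∑ y, m x * meanKer μ m x y * ((f y - f x) * h y) := by
    rw [sum_comm]
    simp only [mul_meanKer_comm hP]
  have h₃ : ∑ x, ∑ y, m x * meanKer μ m x y * ((f x - f y) * (h x - h y))
      = ∑ x, ∑ y, m x * meanKer μ m x y * ((f x - f y) * h x)
        + ∑ x, ∑ y, m x * meanKer μ m x y * ((f y - f x) * h y) := by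
    rw [← sum_add_distrib]
    exact sum_congr rfl fun x _ => by rw [← sum_add_distrib]; exact sum_congr rfl fun y _ => by ring
  linarith

theorem sum_lap_mul_le [Nontrivial V] (hG : IsGraph μ) (hP : IsPerron μ m)
    (hD : ∀ x y : V, (0 < μ x y ∨ 0 < μ y x) → max (gdist μ x y) (gdist μ y x) ≤ Λ)
    {f : V → ℝ} (hf : ∀ a b, f b - f a ≤ gdist μ a b) (h : V → ℝ) :
    ∑ z, lap μ m f z * (h z * m z)
      ≤ Λ / 2 * ∑ x, ∑ y, |h y - h x| * (m x * meanKer μ m x y) := by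
  rw [sum_lap_mul_eq hG hP, mul_sum, sum_div]
  refine sum_le_sum fun x _ => ?_
  rw [mul_sum, sum_div]
  refine sum_le_sum fun y _ => ?_
  have hprod : (f x - f y) * (h x - h y) ≤ |f x - f y| * |h y - h x| := by
    rw [abs_sub_comm (h y), ← abs_mul]
    exact le_abs_self _
  have hm := (hP.1 x).le
  calc m x * meanKer μ m x y * ((f x - f y) * (h x - h y)) / 2
      ≤ m x * (meanKer μ m x y * |f x - f y|) * |h y - h x| / 2 := by
        have := mul_le_mul_of_nonneg_left hprod (mul_nonneg hm (meanKer_nonneg hG hP x y))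
        linarith
    _ ≤ m x * (meanKer μ m x y * Λ) * |h y - h x| / 2 := by
        gcongr ?_ * _ / _
        exact mul_le_mul_of_nonneg_left (meanKer_mul_abs_sub_le hG hP hD hf x y) hm
    _ = Λ / 2 * (|h y - h x| * (m x * meanKer μ m x y)) := by ring

noncomputable def lazyWalk (μ : V → V → ℝ) (m : V → ℝ) (f : V → ℝ) : V → ℝ :=
  fun z => f z - lap μ m f z / 2

theorem lazyWalk_sub_le [Nontrivial V] (hG : IsGraph μ) (hP : IsPerron μ m)
    (hcurv : ∀ x y : V, x ≠ y → K ≤ ricci μ m x y)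
    (hD : ∀ x y : V, (0 < μ x y ∨ 0 < μ y x) → max (gdist μ x y) (gdist μ y x) ≤ Λ)
    {f : V → ℝ} (hf : ∀ a b, f b - f a ≤ gdist μ a b) (x y : V) :
    lazyWalk μ m f y - lazyWalk μ m f x ≤ (1 - K / 2) * gdist μ x y := by
  rcases eq_or_ne x y with rfl | hxy
  · simp [gdist_self]
  obtain ⟨g, hg, hgx, hgy, hfg⟩ :=
    exists_lipschitz_ge_attaining gdist_self (gdist_triangle hG.2.2) hf x y
  have hcurvg := mul_gdist_le_lap_sub hG hP hcurv hD hxy hg (by rw [hgx, hgy]; ring)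
  have hy : ∑ w, meanKer μ m y w * f w ≤ ∑ w, meanKer μ m y w * g w :=
    sum_le_sum fun w _ => mul_le_mul_of_nonneg_left (hfg w).1 (meanKer_nonneg hG hP y w)
  have hx : ∑ w, meanKer μ m x w * g w
      ≤ ∑ w, meanKer μ m x w * f w + (gdist μ x y - (f y - f x)) := by
    calc ∑ w, meanKer μ m x w * g w
        ≤ ∑ w, meanKer μ m x w * (f w + (gdist μ x y - (f y - f x))) :=
          sum_le_sum fun w _ => mul_le_mul_of_nonneg_left (hfg w).2 (meanKer_nonneg hG hP x w)
      _ = _ := by simp only [mul_add, sum_add_distrib, ← sum_mul, sum_meanKer_eq_one hG hP, one_mul]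
  simp only [lazyWalk, lap_apply] at hcurvg ⊢
  linarith

end Laplacian

section TransportInformation

variable {V : Type*} [Fintype V] [DecidableEq V] {μ : V → V → ℝ} {m : V → ℝ} {K Λ : ℝ}

theorem sum_mul_sub_le_gradient [Nontrivial V] (hG : IsGraph μ) (hP : IsPerron μ m) (hK : 0 < K)
    (hcurv : ∀ x y : V, x ≠ y → K ≤ ricci μ m x y)
    (hD : ∀ x y : V, (0 < μ x y ∨ 0 < μ y x) → max (gdist μ x y) (gdist μ y x) ≤ Λ)
    {ρ : V → ℝ} (hρ : ∀ x, 0 ≤ ρ x) (hρm : ∑ x, ρ x * m x = 1)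
    {f : V → ℝ} (hf : ∀ a b, f b - f a ≤ gdist μ a b) :
    ∑ z, f z * (ρ z * m z - m z)
      ≤ Λ / (2 * K) * ∑ x, ∑ y, |ρ y - ρ x| * (m x * meanKer μ m x y) := by
  set Gs := ∑ x, ∑ y, |ρ y - ρ x| * (m x * meanKer μ m x y)
  set values := {s | ∃ g : V → ℝ, (∀ a b, g b - g a ≤ gdist μ a b) ∧
    ∑ z, g z * (ρ z * m z - m z) = s}
  have hν : ∑ z, (ρ z * m z - m z) = 0 := by rw [sum_sub_distrib, hρm, hP.2.1, sub_self]
  have hbdd : BddAbove values := by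
    refine ⟨∑ x, ∑ y, gdist μ x y * (m x * (ρ y * m y)), ?_⟩
    rintro _ ⟨g, hg, rfl⟩
    exact sum_mul_sub_le_cost (isCoupling_prod (fun x => (hP.1 x).le)
      (fun x => mul_nonneg (hρ x) (hP.1 x).le) hP.2.1 hρm) hg
  have hr : 0 ≤ 1 - K / 2 := by
    obtain ⟨a, b, hab⟩ := exists_pair_ne V
    have := lazyWalk_sub_le hG hP hcurv hD (f := 0) (by simp [gdist_nonneg]) a b
    simp only [lazyWalk, lap_apply] at this
    exact nonneg_of_mul_nonneg_left (by simpa using this)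
      (one_pos.trans_le (one_le_gdist hG.2.2 hab))
  have hstep : ∀ s ∈ values, s ≤ (1 - K / 2) * sSup values + Λ / 4 * Gs := by
    rintro _ ⟨g, hg, rfl⟩
    have hsplit : ∑ z, g z * (ρ z * m z - m z) = ∑ z, lazyWalk μ m g z * (ρ z * m z - m z)
        + (∑ z, lap μ m g z * ((ρ z - 1) * m z)) / 2 := by
      simp only [lazyWalk, sum_div, ← sum_add_distrib]
      exact sum_congr rfl fun z _ => by ring
    have hlazy := sum_mul_le_mul_of_lipschitz hν (fun f hf => le_csSup hbdd ⟨f, hf, rfl⟩) hr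
      (lazyWalk_sub_le hG hP hcurv hD hg)
    have hlap := sum_lap_mul_le hG hP hD hg (fun z => ρ z - 1)
    simp only [sub_sub_sub_cancel_right] at hlap
    linarith
  have hS := csSup_le (show values.Nonempty from ⟨0, 0, by simp [gdist_nonneg], by simp⟩) hstep
  calc ∑ z, f z * (ρ z * m z - m z) ≤ sSup values := le_csSup hbdd ⟨f, hf, rfl⟩
    _ ≤ Λ / (2 * K) * Gs := by
      rw [div_mul_eq_mul_div, le_div_iff₀ (by positivity)]
      linarith

theorem wass_le_gradient (hG : IsGraph μ) (hP : IsPerron μ m) (hK : 0 < K)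
    (hcurv : ∀ x y : V, x ≠ y → K ≤ ricci μ m x y)
    (hD : ∀ x y : V, (0 < μ x y ∨ 0 < μ y x) → max (gdist μ x y) (gdist μ y x) ≤ Λ)
    {ρ : V → ℝ} (hρ : ∀ x, 0 ≤ ρ x) (hρm : ∑ x, ρ x * m x = 1) :
    wass (gdist μ) m (fun x => ρ x * m x)
      ≤ Λ / (2 * K) * ∑ x, ∑ y, |ρ y - ρ x| * (m x * meanKer μ m x y) := by
  have hm : ∀ x, 0 ≤ m x := fun x => (hP.1 x).le
  have hρm' : ∀ x, 0 ≤ ρ x * m x := fun x => mul_nonneg (hρ x) (hm x)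
  -- on a single vertex `ker = 0 / 0 = 0`, so the kernel is not stochastic
  rcases subsingleton_or_nontrivial V with hV | hV
  · have hxy : ∀ x y : V, x = y := Subsingleton.elim
    refine (wass_le_cost gdist_nonneg (isCoupling_prod hm hρm' hP.2.1 hρm)).trans_eq ?_
    rw [sum_eq_zero fun x _ => sum_eq_zero fun y _ => by rw [hxy x y, gdist_self, zero_mul],
      sum_eq_zero fun x _ => sum_eq_zero fun y _ => by rw [hxy x y, sub_self, abs_zero, zero_mul],
      mul_zero]
  · obtain ⟨π, hπ, hcost⟩ := exists_coupling_cost_le (gdist μ) gdist_self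
      (gdist_triangle hG.2.2) hm hρm' hP.2.1 hρm
      fun f hf => sum_mul_sub_le_gradient hG hP hK hcurv hD hρ hρm hf
    exact (wass_le_cost gdist_nonneg hπ).trans hcost

end TransportInformation

theorem sq_sum_abs_sub_le {V : Type*} [Fintype V] {w : V → V → ℝ} {ρ : V → ℝ}
    (hw : ∀ x y, 0 ≤ w x y) (hρ : ∀ x, 0 ≤ ρ x)
    (h₁ : ∑ x, ∑ y, ρ x * w x y ≤ 1) (h₂ : ∑ x, ∑ y, ρ y * w x y ≤ 1) :
    (∑ x, ∑ y, |ρ y - ρ x| * w x y) ^ 2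
      ≤ (∑ x, ∑ y, (Real.sqrt (ρ y) - Real.sqrt (ρ x)) ^ 2 * w x y)
        * (4 - ∑ x, ∑ y, (Real.sqrt (ρ y) - Real.sqrt (ρ x)) ^ 2 * w x y) := by
  set I := ∑ x, ∑ y, (Real.sqrt (ρ y) - Real.sqrt (ρ x)) ^ 2 * w x y
  have hcs := sum_sq_le_sum_mul_sum_of_sq_le_mul (univ : Finset (V × V))
    (r := fun p => |ρ p.2 - ρ p.1| * w p.1 p.2)
    (f := fun p => (Real.sqrt (ρ p.2) - Real.sqrt (ρ p.1)) ^ 2 * w p.1 p.2)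
    (g := fun p => (Real.sqrt (ρ p.2) + Real.sqrt (ρ p.1)) ^ 2 * w p.1 p.2)
    (fun p _ => mul_nonneg (sq_nonneg _) (hw _ _)) (fun p _ => mul_nonneg (sq_nonneg _) (hw _ _))
    (fun p _ => le_of_eq <| by
      have hdiff : ρ p.2 - ρ p.1 = (Real.sqrt (ρ p.2) - Real.sqrt (ρ p.1))
          * (Real.sqrt (ρ p.2) + Real.sqrt (ρ p.1)) := by
        linear_combination Real.sq_sqrt (hρ p.1) - Real.sq_sqrt (hρ p.2)
      rw [mul_pow, sq_abs, hdiff]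
      ring)
  simp only [Fintype.sum_prod_type] at hcs
  have hg : ∑ x, ∑ y, (Real.sqrt (ρ y) + Real.sqrt (ρ x)) ^ 2 * w x y + I
      = 2 * ∑ x, ∑ y, ρ y * w x y + 2 * ∑ x, ∑ y, ρ x * w x y := by
    simp only [I, mul_sum, ← sum_add_distrib]
    refine sum_congr rfl fun x _ => sum_congr rfl fun y _ => ?_
    linear_combination (2 * w x y) * Real.sq_sqrt (hρ y) + (2 * w x y) * Real.sq_sqrt (hρ x)
  have hI : 0 ≤ I := sum_nonneg fun x _ => sum_nonneg fun y _ => mul_nonneg (sq_nonneg _) (hw x y)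
  exact hcs.trans (mul_le_mul_of_nonneg_left (by linarith) hI)

theorem transport_information_inequality_general {V : Type*} [Fintype V] [DecidableEq V]
    (μ : V → V → ℝ) (m : V → ℝ) (K Λ : ℝ)
    (hG : IsGraph μ) (hP : IsPerron μ m) (hK : 0 < K)
    (hcurv : ∀ x y : V, x ≠ y → K ≤ ricci μ m x y)
    (hD : ∀ x y : V, (0 < μ x y ∨ 0 < μ y x) → max (gdist μ x y) (gdist μ y x) ≤ Λ) :
    ∀ ρ : V → ℝ, (∀ x, 0 ≤ ρ x) → ∑ x, ρ x * m x = 1 →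
      wass (gdist μ) m (fun x => ρ x * m x) ^ 2
          ≤ (Λ ^ 2 / (2 * K ^ 2))
            * (2 * ∑ x, ∑ y, (Real.sqrt (ρ y) - Real.sqrt (ρ x)) ^ 2 * (m x * meanKer μ m x y))
            * (1 - (2 * ∑ x, ∑ y, (Real.sqrt (ρ y) - Real.sqrt (ρ x)) ^ 2
                * (m x * meanKer μ m x y)) / 8)
        ∧ wass (gdist μ) m (fun x => ρ x * m x) ^ 2
          ≤ (Λ ^ 2 / (2 * K ^ 2))
            * (2 * ∑ x, ∑ y, (Real.sqrt (ρ y) - Real.sqrt (ρ x)) ^ 2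
                * (m x * meanKer μ m x y)) := by
  intro ρ hρ hρm
  set I := ∑ x, ∑ y, (Real.sqrt (ρ y) - Real.sqrt (ρ x)) ^ 2 * (m x * meanKer μ m x y)
  have hw x y : 0 ≤ m x * meanKer μ m x y := mul_nonneg (hP.1 x).le (meanKer_nonneg hG hP x y)
  have hmass := sum_sum_mul_meanKer_le hP hρ hρm
  have hCS : (∑ x, ∑ y, |ρ y - ρ x| * (m x * meanKer μ m x y)) ^ 2 ≤ I * (4 - I) :=
    sq_sum_abs_sub_le hw hρ hmass <| by
      rw [sum_comm]
      simpa only [mul_meanKer_comm hP] using hmass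
  have hW0 := wass_nonneg (d := gdist μ) gdist_nonneg
    (isCoupling_prod (fun x => (hP.1 x).le) (fun x => mul_nonneg (hρ x) (hP.1 x).le) hP.2.1 hρm)
  have hW := pow_le_pow_left₀ hW0 (wass_le_gradient hG hP hK hcurv hD hρ hρm) 2
  have hI : 0 ≤ I := sum_nonneg fun x _ => sum_nonneg fun y _ => mul_nonneg (sq_nonneg _) (hw x y)
  have hmain : wass (gdist μ) m (fun x => ρ x * m x) ^ 2
      ≤ Λ ^ 2 / (2 * K ^ 2) * (2 * I) * (1 - 2 * I / 8) := by
    refine hW.trans ?_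
    rw [mul_pow]
    convert mul_le_mul_of_nonneg_left hCS (sq_nonneg (Λ / (2 * K))) using 1
    field_simp
    ring
  exact ⟨hmain, hmain.trans (mul_le_of_le_one_right (by positivity) (by linarith))⟩

/-- Theorem 5.2: transportation-information inequality under a positive Ricci curvature
bound and bounded jumps, with Fisher information
`ℐ(ρ) = 2 Σ_{x,y} (√ρ(y) − √ρ(x))² 𝔪_{xy}`. -/
theorem transport_information_inequality {V : Type*} [Fintype V] [DecidableEq V] [Nonempty V]
    (μ : V → V → ℝ) (m : V → ℝ) (K Λ : ℝ)
    (hG : IsGraph μ) (hP : IsPerron μ m) (hK : 0 < K)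
    (hcurv : ∀ x y : V, x ≠ y → K ≤ ricci μ m x y) (hΛ : 1 ≤ Λ)
    (hD : ∀ x y : V, (0 < μ x y ∨ 0 < μ y x) → max (gdist μ x y) (gdist μ y x) ≤ Λ) :
    ∀ ρ : V → ℝ, (∀ x, 0 ≤ ρ x) → ∑ x, ρ x * m x = 1 →
      wass (gdist μ) m (fun x => ρ x * m x) ^ 2
          ≤ (Λ ^ 2 / (2 * K ^ 2))
            * (2 * ∑ x, ∑ y, (Real.sqrt (ρ y) - Real.sqrt (ρ x)) ^ 2 * (m x * meanKer μ m x y))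
            * (1 - (2 * ∑ x, ∑ y, (Real.sqrt (ρ y) - Real.sqrt (ρ x)) ^ 2
                * (m x * meanKer μ m x y)) / 8)
        ∧ wass (gdist μ) m (fun x => ρ x * m x) ^ 2
          ≤ (Λ ^ 2 / (2 * K ^ 2))
            * (2 * ∑ x, ∑ y, (Real.sqrt (ρ y) - Real.sqrt (ρ x)) ^ 2
                * (m x * meanKer μ m x y)) :=
  transport_information_inequality_general μ m K Λ hG hP hK hcurv hD

end Chung
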